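/- For N ≥ 1 and β ∈ (0,1), define η(n) = t*(N - n, β) for n ∈ {0,1,…,N}, where t*(k,β) is the unique solution of (1-β)/N = ∑_{i=0}^{k} C(N,i)(1-t)^i t^{N-i} for 1 ≤ k ≤ N-1, t*(0,β) = (1-β)^{1/N}, and t*(N,β) = 0. Then η is monotone nondecreasing in n, η(0) = 0, and η(N) = (1-β)^{1/N}; in particular 0 ≤ η(n) ≤ (1-β)^{1/N} for all n. -/

import Mathlib

/-
`binCDF N k` is a strictly increasing function of `t ∈ [0, 1]` for `k < N`: its derivative
telescopes to the single positive term `C(N, k+1) (k+1) (1-t)^k t^(N-k-1)`. Since also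
`binCDF N k ≤ binCDF N (k+1)` pointwise, `binCDF N (k+1) (t (k+1)) ≤ binCDF N k (t k)` forces
`t (k+1) ≤ t k`; the hypotheses give this comparison with both sides at the level `(1-β)/N`, except
at `k = 0`, where the value is `t 0 ^ N = 1 - β`, and at `k + 1 = N`, where `t N = 0`. Hence `t` is
antitone on `{0, …, N}` and `η n = t (N - n)` is monotone.
-/

open Finset Set

/-- The cumulative distribution function of a Binomial(N, 1-t) random variable at k. -/
noncomputable def binCDF (N k : ℕ) (t : ℝ) : ℝ :=
  ∑ i ∈ Finset.range (k + 1), (N.choose i : ℝ) * (1 - t) ^ i * t ^ (N - i)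

lemma binCDF_zero (N : ℕ) (s : ℝ) : binCDF N 0 s = s ^ N := by
  simp [binCDF]

lemma hasDerivAt_binCDF (N k : ℕ) (x : ℝ) :
    HasDerivAt (binCDF N k)
      ((N.choose (k + 1) : ℝ) * (k + 1) * (1 - x) ^ k * x ^ (N - (k + 1))) x := by
  set g : ℕ → ℝ := fun j => (N.choose j : ℝ) * j * (1 - x) ^ (j - 1) * x ^ (N - j) with hg
  have hterm : ∀ i ∈ range (k + 1),
      HasDerivAt (fun s : ℝ => (N.choose i : ℝ) * (1 - s) ^ i * s ^ (N - i))
        (g (i + 1) - g i) x := by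
    intro i _
    have h := ((((hasDerivAt_id x).const_sub 1).fun_pow i).const_mul (N.choose i : ℝ)).fun_mul
      (hasDerivAt_pow (N - i) x)
    refine h.congr_deriv ?_
    have hchoose : (N.choose (i + 1) : ℝ) * ((i + 1 : ℕ) : ℝ) = N.choose i * ((N - i : ℕ) : ℝ) := by
      exact_mod_cast Nat.choose_succ_right_eq N i
    rw [hg]
    simp only [id, Nat.add_sub_cancel, show N - (i + 1) = N - i - 1 by omega]
    rw [hchoose]
    ring
  have hsum := HasDerivAt.fun_sum hterm
  rw [sum_range_sub g (k + 1)] at hsum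
  refine hsum.congr_deriv ?_
  simp only [hg, Nat.add_sub_cancel]
  push_cast
  ring

lemma binCDF_strictMonoOn {N k : ℕ} (hk : k < N) : StrictMonoOn (binCDF N k) (Icc 0 1) := by
  have hderiv := hasDerivAt_binCDF N k
  refine strictMonoOn_of_deriv_pos (convex_Icc 0 1)
    (fun x _ => (hderiv x).continuousAt.continuousWithinAt) fun x hx => ?_
  obtain ⟨hx0, hx1⟩ : 0 < x ∧ x < 1 := by rwa [interior_Icc, Set.mem_Ioo] at hx
  have hchoose : (0 : ℝ) < N.choose (k + 1) := by exact_mod_cast Nat.choose_pos hk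
  have hx1' : 0 < 1 - x := sub_pos.2 hx1
  rw [(hderiv x).deriv]
  positivity

lemma binCDF_le_binCDF_succ (N k : ℕ) {s : ℝ} (hs : s ∈ Icc (0 : ℝ) 1) :
    binCDF N k s ≤ binCDF N (k + 1) s := by
  obtain ⟨hs0, hs1⟩ := hs
  have hs1' : 0 ≤ 1 - s := sub_nonneg.2 hs1
  rw [binCDF, binCDF, sum_range_succ _ (k + 1)]
  exact le_add_of_nonneg_right (by positivity)

lemma le_of_binCDF_succ_le {N k : ℕ} (hk : k < N) {s s' : ℝ} (hs : s ∈ Icc (0 : ℝ) 1)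
    (hs' : s' ∈ Icc (0 : ℝ) 1) (h : binCDF N (k + 1) s' ≤ binCDF N k s) : s' ≤ s :=
  ((binCDF_strictMonoOn hk).le_iff_le hs' hs).mp ((binCDF_le_binCDF_succ N k hs').trans h)

theorem stmt_19 (N : ℕ) (hN : 1 ≤ N) (β : ℝ) (hβ : β ∈ Set.Ioo (0 : ℝ) 1)
    (t η : ℕ → ℝ)
    (ht0 : t 0 = (1 - β) ^ ((1 : ℝ) / N)) (htN : t N = 0)
    (ht : ∀ k, 1 ≤ k → k ≤ N - 1 →
      t k ∈ Set.Ioo (0 : ℝ) 1 ∧ (1 - β) / N = binCDF N k (t k))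
    (hη : ∀ n ≤ N, η n = t (N - n)) :
    (∀ n m, n ≤ m → m ≤ N → η n ≤ η m) ∧
    η 0 = 0 ∧ η N = (1 - β) ^ ((1 : ℝ) / N) ∧
    ∀ n ≤ N, 0 ≤ η n ∧ η n ≤ (1 - β) ^ ((1 : ℝ) / N) := by
  have hβ' : 0 < 1 - β := sub_pos.2 hβ.2
  have hmem : ∀ k < N, t k ∈ Icc (0 : ℝ) 1 := by
    rintro (_ | k) hk
    · rw [ht0]
      exact ⟨by positivity, Real.rpow_le_one hβ'.le (by linarith [hβ.1]) (by positivity)⟩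
    · exact Ioo_subset_Icc_self (ht (k + 1) (by omega) (by omega)).1
  have hlevel : ∀ k < N, (1 - β) / N ≤ binCDF N k (t k) := by
    rintro (_ | k) hk
    · rw [binCDF_zero, ht0, one_div, Real.rpow_inv_natCast_pow hβ'.le (by omega)]
      exact div_le_self hβ'.le (by exact_mod_cast hN)
    · exact (ht (k + 1) (by omega) (by omega)).2.le
  have hstep : ∀ k, k + 1 ≤ N → t (k + 1) ≤ t k := by
    intro k hk
    rcases hk.eq_or_lt with hkN | hkN
    · rw [hkN, htN]
      exact (hmem k hk).1
    · refine le_of_binCDF_succ_le hk (hmem k hk) (hmem (k + 1) hkN) ?_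
      rw [← (ht (k + 1) (by omega) (by omega)).2]
      exact hlevel k hk
  have hanti : AntitoneOn t (Set.Iic N) :=
    antitoneOn_of_succ_le ordConnected_Iic fun k _ _ hk => hstep k hk
  have hmono : ∀ n m, n ≤ m → m ≤ N → η n ≤ η m := fun n m hnm hmN => by
    rw [hη n (hnm.trans hmN), hη m hmN]
    exact hanti (Set.mem_Iic.2 (Nat.sub_le N m)) (Set.mem_Iic.2 (Nat.sub_le N n)) (by omega)
  have hη0 : η 0 = 0 := by rw [hη 0 (Nat.zero_le N), Nat.sub_zero, htN]
  have hηN : η N = (1 - β) ^ ((1 : ℝ) / N) := by rw [hη N le_rfl, Nat.sub_self, ht0]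
  exact ⟨hmono, hη0, hηN, fun n hn =>
    ⟨hη0 ▸ hmono 0 n n.zero_le hn, hηN ▸ hmono n N hn le_rfl⟩⟩
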